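/- Under the hypotheses of the previous statement (a.s. torus distance in coordinate d exceeds ε), with Q = [0,1)^{d-1} × [ε/2, 1) and R = [0,1)^{d-1} × [1-ε/2, 1), one has P(p_1 ∈ Q | p_2 ∈ R) = 1, while P(p_1 ∈ Q) = 1 - ε/2 < 1. -/

import Mathlib

open MeasureTheory ProbabilityTheory

/-- Distance on the one-dimensional torus `T = [0,1)`. -/
noncomputable def torusDist (x y : ℝ) : ℝ := min |x - y| (1 - |x - y|)


private lemma torus_key {ε x y : ℝ} (hε' : ε ≤ 1 / 2)
    (hx : 0 ≤ x) (hy : 1 - ε / 2 ≤ y) (hy1 : y < 1)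
    (hd : ¬ min |x - y| (1 - |x - y|) ≤ ε) : ε / 2 ≤ x := by
  by_contra hxlt
  push_neg at hxlt
  have hxy : x ≤ y := by linarith
  have habs : |x - y| = y - x := by
    rw [abs_sub_comm, abs_of_nonneg (by linarith)]
  rw [habs] at hd
  push_neg at hd
  have hmin : min (y - x) (1 - (y - x)) ≤ 1 - (y - x) := min_le_right _ _
  linarith

/-- For a sampling scheme `(p_j)_{j=1}^N` of points uniform on `[0,1)^d` such that almost surely
the torus distance of the `d`-th coordinates of `p_1` and `p_2` exceeds `ε` (`0 < ε ≤ 1/2`), with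
`Q = [0,1)^{d-1} × [ε/2, 1)` and `R = [0,1)^{d-1} × [1-ε/2, 1)`, one has
`P(p_1 ∈ Q | p_2 ∈ R) = 1`, while `P(p_1 ∈ Q) = 1 - ε/2 < 1`. -/
theorem fixed_distance_conditional_probability_one
    (N d : ℕ) (hN : 2 ≤ N) (hd : 1 ≤ d)
    {Ω : Type*} [MeasurableSpace Ω] (μ : Measure Ω) [IsProbabilityMeasure μ]
    (p : Fin N → Ω → Fin d → ℝ) (hmeas : ∀ j, Measurable (p j))
    (hunif : ∀ j, μ.map (p j) = Measure.pi fun _ : Fin d => volume.restrict (Set.Ico (0 : ℝ) 1))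
    (hexch : ∀ σ : Equiv.Perm (Fin N),
      μ.map (fun ω => fun j => p (σ j) ω) = μ.map (fun ω => fun j => p j ω))
    (ε : ℝ) (hε : 0 < ε) (hε' : ε ≤ 1 / 2)
    (hdist : μ {ω | torusDist (p ⟨0, by omega⟩ ω ⟨d - 1, by omega⟩)
        (p ⟨1, by omega⟩ ω ⟨d - 1, by omega⟩) ≤ ε} = 0)
    (hR : 0 < μ {ω | ∀ k, p ⟨1, by omega⟩ ω k ∈
        Set.Ico (if k = (⟨d - 1, by omega⟩ : Fin d) then 1 - ε / 2 else 0) 1}) :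
    (μ[|{ω | ∀ k, p ⟨1, by omega⟩ ω k ∈
          Set.Ico (if k = (⟨d - 1, by omega⟩ : Fin d) then 1 - ε / 2 else 0) 1}])
        {ω | ∀ k, p ⟨0, by omega⟩ ω k ∈
          Set.Ico (if k = (⟨d - 1, by omega⟩ : Fin d) then ε / 2 else 0) 1} = 1 ∧
    μ {ω | ∀ k, p ⟨0, by omega⟩ ω k ∈
        Set.Ico (if k = (⟨d - 1, by omega⟩ : Fin d) then ε / 2 else 0) 1}
      = ENNReal.ofReal (1 - ε / 2) ∧
    ENNReal.ofReal (1 - ε / 2) < 1 := by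
  have h0N : 0 < N := by omega
  have h1N : 1 < N := by omega
  have hLd : d - 1 < d := by omega
  set i0 : Fin N := ⟨0, h0N⟩ with hi0
  set i1 : Fin N := ⟨1, h1N⟩ with hi1
  set L : Fin d := ⟨d - 1, hLd⟩ with hL
  -- the target sets as preimages of boxes
  set QB : Set (Fin d → ℝ) :=
    Set.univ.pi fun k => Set.Ico (if k = L then ε / 2 else 0) 1 with hQB
  set RB : Set (Fin d → ℝ) :=
    Set.univ.pi fun k => Set.Ico (if k = L then 1 - ε / 2 else 0) 1 with hRB
  set UB : Set (Fin d → ℝ) := Set.univ.pi fun _ => Set.Ico (0 : ℝ) 1 with hUB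
  have hQBm : MeasurableSet QB := MeasurableSet.univ_pi fun _ => measurableSet_Ico
  have hRBm : MeasurableSet RB := MeasurableSet.univ_pi fun _ => measurableSet_Ico
  have hUBm : MeasurableSet UB := MeasurableSet.univ_pi fun _ => measurableSet_Ico
  have hQeq : {ω | ∀ k, p i0 ω k ∈
      Set.Ico (if k = L then ε / 2 else 0) 1} = p i0 ⁻¹' QB := by
    ext ω; simp [hQB, Set.mem_univ_pi]
  have hReq : {ω | ∀ k, p i1 ω k ∈
      Set.Ico (if k = L then 1 - ε / 2 else 0) 1} = p i1 ⁻¹' RB := by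
    ext ω; simp [hRB, Set.mem_univ_pi]
  -- generic computation of box probabilities
  have hbox : ∀ (j : Fin N) (a : ℝ), 0 ≤ a → a ≤ 1 →
      μ (p j ⁻¹' (Set.univ.pi fun k => Set.Ico (if k = L then a else 0) 1))
        = ENNReal.ofReal (1 - a) := by
    intro j a ha ha1
    rw [← Measure.map_apply (hmeas j)
      (MeasurableSet.univ_pi fun _ => measurableSet_Ico), hunif j, Measure.pi_pi]
    have hfac : ∀ k : Fin d,
        (volume.restrict (Set.Ico (0 : ℝ) 1)) (Set.Ico (if k = L then a else 0) 1)
          = if k = L then ENNReal.ofReal (1 - a) else 1 := by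
      intro k
      rw [Measure.restrict_apply measurableSet_Ico, Set.Ico_inter_Ico]
      by_cases hk : k = L <;>
        simp [hk, max_eq_left, ha, Real.volume_Ico]
    calc (∏ k : Fin d,
          (volume.restrict (Set.Ico (0 : ℝ) 1)) (Set.Ico (if k = L then a else 0) 1))
        = ∏ k : Fin d, if k = L then ENNReal.ofReal (1 - a) else 1 :=
          Finset.prod_congr rfl fun k _ => hfac k
      _ = ENNReal.ofReal (1 - a) := by
          rw [Finset.prod_ite_eq' Finset.univ L fun _ => ENNReal.ofReal (1 - a)]
          simp
  have hQval : μ (p i0 ⁻¹' QB) = ENNReal.ofReal (1 - ε / 2) := by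
    rw [hQB]; exact hbox i0 (ε / 2) (by linarith) (by linarith)
  -- a.s. all coordinates of `p i0` lie in `[0,1)`
  have hUval : μ (p i0 ⁻¹' UB) = 1 := by
    rw [hUB]
    have := hbox i0 0 le_rfl zero_le_one
    simpa using this
  have hUnull : μ ((p i0 ⁻¹' UB)ᶜ) = 0 := by
    rw [measure_compl ((hmeas i0) hUBm) (measure_ne_top μ _), hUval]
    simp
  -- the bad set: torus distance ≤ ε
  set B : Set Ω := {ω | torusDist (p i0 ω L) (p i1 ω L) ≤ ε} with hB
  have hBnull : μ B = 0 := hdist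
  -- key inclusion: R \ Q ⊆ B ∪ (p i0 ⁻¹' UB)ᶜ
  have hincl : (p i1 ⁻¹' RB) \ (p i0 ⁻¹' QB) ⊆ B ∪ (p i0 ⁻¹' UB)ᶜ := by
    intro ω hω
    by_contra hcon
    simp only [Set.mem_union, not_or, Set.mem_compl_iff, not_not] at hcon
    obtain ⟨hnB, hU⟩ := hcon
    obtain ⟨hRω, hnQ⟩ := hω
    apply hnQ
    have hUx : ∀ k, p i0 ω k ∈ Set.Ico (0 : ℝ) 1 := by
      intro k
      have := hU; rw [Set.mem_preimage, hUB, Set.mem_univ_pi] at this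
      exact this k
    have hnB' : ¬ torusDist (p i0 ω L) (p i1 ω L) ≤ ε := hnB
    rw [torusDist] at hnB'
    have hy : p i1 ω L ∈ Set.Ico (1 - ε / 2) 1 := by
      have := hRω; rw [Set.mem_preimage, hRB, Set.mem_univ_pi] at this
      have h := this L; rwa [if_pos rfl] at h
    rw [Set.mem_preimage, hQB, Set.mem_univ_pi]
    intro k
    by_cases hkL : k = L
    · rw [if_pos hkL, hkL]
      exact ⟨torus_key hε' (hUx L).1 hy.1 hy.2 hnB', (hUx L).2⟩
    · rw [if_neg hkL]
      exact hUx k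
  have hdiff : μ ((p i1 ⁻¹' RB) \ (p i0 ⁻¹' QB)) = 0 :=
    le_antisymm (le_trans (measure_mono hincl)
      (le_trans (measure_union_le _ _) (by rw [hBnull, hUnull]; simp))) zero_le
  have hinter : μ ((p i1 ⁻¹' RB) ∩ (p i0 ⁻¹' QB)) = μ (p i1 ⁻¹' RB) := by
    rw [← measure_inter_add_diff (p i1 ⁻¹' RB) ((hmeas i0) hQBm), hdiff, add_zero]
  refine ⟨?_, ?_, ?_⟩
  · rw [hQeq, hReq]
    rw [cond_apply ((hmeas i1) hRBm) μ]
    rw [hinter]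
    refine ENNReal.inv_mul_cancel ?_ (measure_ne_top μ _)
    rw [hReq] at hR
    exact hR.ne'
  · rw [hQeq, hQval]
  · rw [ENNReal.ofReal_lt_one]
    linarith
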